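/- If f_0: (ZMod 2)^{m} → ZMod q lies in some complementary array set of size N_0 and f_1: (ZMod 2)^{m'} → ZMod q lies in some complementary array set of size N_1, then the function f(x,x') = f_0(x) + f_1(x') on (ZMod 2)^{m+m'} lies in a complementary array set of size N_0·N_1; concretely, if {f_0 = h_0, h_1, ..., h_{N_0-1}} and {f_1 = k_0, k_1, ..., k_{N_1-1}} are complementary array sets, then {h_a(x) + k_b(x') : 0 ≤ a < N_0, 0 ≤ b < N_1} is a complementary array set of size N_0·N_1. -/
import Mathlib

open scoped BigOperators

noncomputable def omg (q : ℕ) : ℂ := Complex.exp (2 * Real.pi * Complex.I / q)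

noncomputable def ec (q : ℕ) (a : ZMod q) : ℂ := omg q ^ a.val

/-- Aperiodic correlation of arrays `(ZMod 2)^d → ZMod q` at integer shift `τ`. -/
noncomputable def acorr (q d : ℕ) (f1 f2 : (Fin d → ZMod 2) → ZMod q) (τ : Fin d → ℤ) : ℂ :=
  ∑ x : Fin d → ZMod 2, ∑ x' : Fin d → ZMod 2,
    if ∀ k, ((x k).val : ℤ) = ((x' k).val : ℤ) + τ k then ec q (f1 x - f2 x') else 0

lemma omg_pow_q (q : ℕ) (hq : 0 < q) : omg q ^ q = 1 := by
  unfold omg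
  rw [← Complex.exp_nat_mul]
  have hne : (q:ℂ) ≠ 0 := Nat.cast_ne_zero.2 hq.ne'
  rw [mul_div_assoc', mul_comm, mul_div_assoc, div_self hne, mul_one,
    Complex.exp_two_pi_mul_I]

lemma omg_pow_mod (q : ℕ) (hq : 0 < q) (n : ℕ) : omg q ^ (n % q) = omg q ^ n := by
  conv_rhs => rw [← Nat.div_add_mod n q]
  rw [pow_add, pow_mul, omg_pow_q q hq, one_pow, one_mul]

lemma ec_add (q : ℕ) (hq : 0 < q) (a b : ZMod q) : ec q (a + b) = ec q a * ec q b := by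
  haveI : NeZero q := ⟨hq.ne'⟩
  unfold ec
  rw [← pow_add, ZMod.val_add, omg_pow_mod q hq]

def pairEquiv (m m' : ℕ) : ((Fin m → ZMod 2) × (Fin m' → ZMod 2)) ≃ (Fin (m + m') → ZMod 2) where
  toFun := fun p => Fin.append p.1 p.2
  invFun := fun f => (fun i => f (Fin.castAdd m' i), fun i => f (Fin.natAdd m i))
  left_inv := by
    intro p
    simp [Fin.append_left, Fin.append_right]
  right_inv := by
    intro f
    funext j
    refine Fin.addCases (fun i => ?_) (fun i => ?_) j
    · simp [Fin.append_left]
    · simp [Fin.append_right]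

lemma acorr_prod (q m m' : ℕ) (hq : 0 < q)
    (h : (Fin m → ZMod 2) → ZMod q) (k : (Fin m' → ZMod 2) → ZMod q)
    (τ : Fin (m + m') → ℤ) :
    acorr q (m + m')
      (fun x => h (fun i => x (Fin.castAdd m' i)) + k (fun i => x (Fin.natAdd m i)))
      (fun x => h (fun i => x (Fin.castAdd m' i)) + k (fun i => x (Fin.natAdd m i))) τ
    = acorr q m h h (fun i => τ (Fin.castAdd m' i)) *
      acorr q m' k k (fun i => τ (Fin.natAdd m i)) := by
  classical
  unfold acorr
  set e := pairEquiv m m' with he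
  have key : ∀ p p' : (Fin m → ZMod 2) × (Fin m' → ZMod 2),
      (if ∀ j, (((e p) j).val : ℤ) = (((e p') j).val : ℤ) + τ j then
        ec q ((h (fun i => (e p) (Fin.castAdd m' i)) + k (fun i => (e p) (Fin.natAdd m i))) -
              (h (fun i => (e p') (Fin.castAdd m' i)) + k (fun i => (e p') (Fin.natAdd m i))))
        else 0)
      = (if ∀ i, ((p.1 i).val : ℤ) = ((p'.1 i).val : ℤ) + τ (Fin.castAdd m' i) then
          ec q (h p.1 - h p'.1) else 0) *
        (if ∀ i, ((p.2 i).val : ℤ) = ((p'.2 i).val : ℤ) + τ (Fin.natAdd m i) then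
          ec q (k p.2 - k p'.2) else 0) := by
    intro p p'
    have hel : ∀ (p : (Fin m → ZMod 2) × (Fin m' → ZMod 2)) i,
        (e p) (Fin.castAdd m' i) = p.1 i := fun p i =>
      show Fin.append p.1 p.2 (Fin.castAdd m' i) = p.1 i from Fin.append_left _ _ _
    have her : ∀ (p : (Fin m → ZMod 2) × (Fin m' → ZMod 2)) i,
        (e p) (Fin.natAdd m i) = p.2 i := fun p i =>
      show Fin.append p.1 p.2 (Fin.natAdd m i) = p.2 i from Fin.append_right _ _ _
    have hcond : (∀ j, (((e p) j).val : ℤ) = (((e p') j).val : ℤ) + τ j) ↔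
        (∀ i, ((p.1 i).val : ℤ) = ((p'.1 i).val : ℤ) + τ (Fin.castAdd m' i)) ∧
        (∀ i, ((p.2 i).val : ℤ) = ((p'.2 i).val : ℤ) + τ (Fin.natAdd m i)) := by
      constructor
      · intro H
        exact ⟨fun i => by simpa [hel] using H (Fin.castAdd m' i),
               fun i => by simpa [her] using H (Fin.natAdd m i)⟩
      · rintro ⟨H1, H2⟩ j
        refine Fin.addCases (fun i => ?_) (fun i => ?_) j
        · simpa [hel] using H1 i
        · simpa [her] using H2 i
    have harg : (h (fun i => (e p) (Fin.castAdd m' i)) + k (fun i => (e p) (Fin.natAdd m i))) -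
              (h (fun i => (e p') (Fin.castAdd m' i)) + k (fun i => (e p') (Fin.natAdd m i)))
        = (h p.1 - h p'.1) + (k p.2 - k p'.2) := by
      simp only [hel, her]
      ring
    rw [harg, ec_add q hq]
    by_cases H1 : ∀ i, ((p.1 i).val : ℤ) = ((p'.1 i).val : ℤ) + τ (Fin.castAdd m' i) <;>
      by_cases H2 : ∀ i, ((p.2 i).val : ℤ) = ((p'.2 i).val : ℤ) + τ (Fin.natAdd m i)
    · rw [if_pos (hcond.mpr ⟨H1, H2⟩), if_pos H1, if_pos H2]
    · rw [if_neg (fun Hc => H2 (hcond.mp Hc).2), if_pos H1, if_neg H2, mul_zero]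
    · rw [if_neg (fun Hc => H1 (hcond.mp Hc).1), if_neg H1, zero_mul]
    · rw [if_neg (fun Hc => H1 (hcond.mp Hc).1), if_neg H1, zero_mul]
  calc ∑ x : Fin (m+m') → ZMod 2, ∑ x' : Fin (m+m') → ZMod 2,
        (if ∀ j, ((x j).val : ℤ) = ((x' j).val : ℤ) + τ j then
        ec q ((h (fun i => x (Fin.castAdd m' i)) + k (fun i => x (Fin.natAdd m i))) -
              (h (fun i => x' (Fin.castAdd m' i)) + k (fun i => x' (Fin.natAdd m i))))
        else 0)
      = ∑ p : (Fin m → ZMod 2) × (Fin m' → ZMod 2),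
        ∑ p' : (Fin m → ZMod 2) × (Fin m' → ZMod 2),
        (if ∀ j, (((e p) j).val : ℤ) = (((e p') j).val : ℤ) + τ j then
        ec q ((h (fun i => (e p) (Fin.castAdd m' i)) + k (fun i => (e p) (Fin.natAdd m i))) -
              (h (fun i => (e p') (Fin.castAdd m' i)) + k (fun i => (e p') (Fin.natAdd m i))))
        else 0) := by
        rw [← Equiv.sum_comp e]
        exact Finset.sum_congr rfl fun p _ => (Equiv.sum_comp e _).symm
    _ = ∑ p : (Fin m → ZMod 2) × (Fin m' → ZMod 2),
        ∑ p' : (Fin m → ZMod 2) × (Fin m' → ZMod 2),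
        (if ∀ i, ((p.1 i).val : ℤ) = ((p'.1 i).val : ℤ) + τ (Fin.castAdd m' i) then
          ec q (h p.1 - h p'.1) else 0) *
        (if ∀ i, ((p.2 i).val : ℤ) = ((p'.2 i).val : ℤ) + τ (Fin.natAdd m i) then
          ec q (k p.2 - k p'.2) else 0) := by
        exact Finset.sum_congr rfl fun p _ => Finset.sum_congr rfl fun p' _ => key p p'
    _ = _ := by
        simp_rw [Fintype.sum_prod_type, Finset.sum_mul_sum]


/-- If `{h_a}` and `{k_b}` are complementary array sets (of sizes `N₀`, `N₁`), then
`{h_a(x) + k_b(x')}` on `(ZMod 2)^{m+m'}` is a complementary array set of size `N₀·N₁`.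
In particular `f(x,x') = f₀(x) + f₁(x') = h₀(x) + k₀(x')` lies in it. -/
theorem stmt19 (q m m' N0 N1 : ℕ) (hq : 0 < q)
    (h : Fin N0 → (Fin m → ZMod 2) → ZMod q)
    (k : Fin N1 → (Fin m' → ZMod 2) → ZMod q)
    (hh : ∀ τ : Fin m → ℤ, τ ≠ 0 → ∑ a : Fin N0, acorr q m (h a) (h a) τ = 0)
    (hk : ∀ τ' : Fin m' → ℤ, τ' ≠ 0 → ∑ b : Fin N1, acorr q m' (k b) (k b) τ' = 0) :
    ∀ τ : Fin (m + m') → ℤ, τ ≠ 0 →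
      ∑ a : Fin N0, ∑ b : Fin N1,
        acorr q (m + m')
          (fun x => h a (fun i => x (Fin.castAdd m' i)) + k b (fun i => x (Fin.natAdd m i)))
          (fun x => h a (fun i => x (Fin.castAdd m' i)) + k b (fun i => x (Fin.natAdd m i)))
          τ = 0 := by
  intro τ hτ
  have step : ∑ a : Fin N0, ∑ b : Fin N1,
        acorr q (m + m')
          (fun x => h a (fun i => x (Fin.castAdd m' i)) + k b (fun i => x (Fin.natAdd m i)))
          (fun x => h a (fun i => x (Fin.castAdd m' i)) + k b (fun i => x (Fin.natAdd m i)))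
          τ
      = (∑ a : Fin N0, acorr q m (h a) (h a) (fun i => τ (Fin.castAdd m' i))) *
        (∑ b : Fin N1, acorr q m' (k b) (k b) (fun i => τ (Fin.natAdd m i))) := by
    rw [Finset.sum_mul_sum]
    exact Finset.sum_congr rfl fun a _ => Finset.sum_congr rfl fun b _ =>
      acorr_prod q m m' hq (h a) (k b) τ
  rw [step]
  by_cases h1 : (fun i => τ (Fin.castAdd m' i)) = (0 : Fin m → ℤ)
  · have h2 : (fun i => τ (Fin.natAdd m i)) ≠ (0 : Fin m' → ℤ) := by
      intro h2
      apply hτ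
      funext j
      refine Fin.addCases (fun i => ?_) (fun i => ?_) j
      · exact congrFun h1 i
      · exact congrFun h2 i
    rw [hk _ h2, mul_zero]
  · rw [hh _ h1, zero_mul]
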